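/- Let Ω be a countably infinite set and let u, v, f ∈ Ω^Ω. If u is injective, d(u) > 0, d(v) = d(f) = ∞, c(v) < ∞, and c(f) < ∞, then f belongs to the subsemigroup of Ω^Ω generated by S_{1,2,3,4,5} ∪ {u, v}. -/

import Mathlib

/-!
Setting: `Ω` is a countably infinite set, `Function.End Ω = Ω → Ω` is the full
transformation semigroup (a subset is closed under composition in one order iff
it is closed in the other, so the lattice of subsemigroups is unaffected by the
left-to-right convention of the paper).
-/

open Cardinal

/-- A transversal of `f`: a set on which `f` is injective and whose image is all of `Ωf`. -/
def IsTransversal {Ω : Type*} (f : Ω → Ω) (T : Set Ω) : Prop :=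
  Set.InjOn f T ∧ f '' T = Set.range f

/-- The defect `d(f) = |Ω \ Ωf|`. -/
noncomputable def defect {Ω : Type*} (f : Ω → Ω) : Cardinal :=
  #((Set.range f)ᶜ : Set Ω)

/-- The collapse `c(f) = |Ω \ Σ|` for a transversal `Σ` of `f` (the value is
independent of the choice of transversal, so the infimum is the common value). -/
noncomputable def collapse {Ω : Type*} (f : Ω → Ω) : Cardinal :=
  ⨅ T : {T : Set Ω // IsTransversal f T}, #(T.1ᶜ : Set Ω)

/-- The infinite contraction index `k(f) = |{α : αf⁻¹ infinite}|`. -/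
noncomputable def contract {Ω : Type*} (f : Ω → Ω) : Cardinal :=
  #({α : Ω | (f ⁻¹' {α}).Infinite} : Set Ω)

def S1 {Ω : Type*} : Set (Function.End Ω) := {f | collapse f = 0 ∨ 0 < defect f}
def S2 {Ω : Type*} : Set (Function.End Ω) := {f | 0 < collapse f ∨ defect f = 0}
def S3 {Ω : Type*} : Set (Function.End Ω) := {f | collapse f < ℵ₀ ∨ ℵ₀ ≤ defect f}
def S4 {Ω : Type*} : Set (Function.End Ω) := {f | ℵ₀ ≤ collapse f ∨ defect f < ℵ₀}
def S5 {Ω : Type*} : Set (Function.End Ω) := {f | contract f < ℵ₀}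

/-- `Sym(Ω)`, the bijections of `Ω`. -/
def SymOmega {Ω : Type*} : Set (Function.End Ω) := {f | Function.Bijective f}

/-- `U = {f : d(f) = ∞ or 0 < c(f) < ∞} ∪ Sym(Ω)`. -/
def SetU {Ω : Type*} : Set (Function.End Ω) :=
  {f | ℵ₀ ≤ defect f ∨ (0 < collapse f ∧ collapse f < ℵ₀)} ∪ SymOmega

/-- `V = {f : c(f) = ∞ or 0 < d(f) < ∞} ∪ Sym(Ω)`. -/
def SetV {Ω : Type*} : Set (Function.End Ω) :=
  {f | ℵ₀ ≤ collapse f ∨ (0 < defect f ∧ defect f < ℵ₀)} ∪ SymOmega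

/-- `S_{1,2,3,4,5}`. -/
def S12345 {Ω : Type*} : Set (Function.End Ω) := S1 ∩ S2 ∩ S3 ∩ S4 ∩ S5

/-- The family `S_1, …, S_5` indexed by `Fin 5`. -/
def SS {Ω : Type*} : Fin 5 → Set (Function.End Ω) := ![S1, S2, S3, S4, S5]

/-!
Write `f = p ∘ g`. The injective factor `g = v ∘ σ ∘ uⁿ` lies in the generated semigroup:
`uⁿ` has defect at least `n = |Ω \ Σ|` for a cofinite transversal `Σ` of `v`, so a bijection
`σ` moves its range into `Σ`, on which `v` is injective, and `g` inherits the infinite defect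
of `v`. The factor `p` agrees with `f` along `g` and is constant on the infinite set `Ω \ Ωg`.
Hence `p` has infinite defect and collapse, and at most one infinite fibre, because the fibres
of `f` are finite when `c(f) < ∞`; so `p ∈ S_{1,2,3,4,5}`.
-/

open Function Set

section Transversal

variable {Ω : Type*} {f : Ω → Ω}

lemma exists_isTransversal (f : Ω → Ω) : ∃ T, IsTransversal f T := by
  obtain ⟨T, hT, hinj⟩ := exists_image_eq_and_injOn univ f
  exact ⟨T, hinj, by rw [hT, image_univ]⟩

instance (f : Ω → Ω) : Nonempty {T : Set Ω // IsTransversal f T} :=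
  let ⟨T, hT⟩ := exists_isTransversal f
  ⟨⟨T, hT⟩⟩

lemma collapse_le_mk_compl {T : Set Ω} (hT : IsTransversal f T) : collapse f ≤ #(Tᶜ : Set Ω) :=
  ciInf_le' _ (⟨T, hT⟩ : {T : Set Ω // IsTransversal f T})

lemma exists_isTransversal_finite_compl (h : collapse f < ℵ₀) :
    ∃ T, IsTransversal f T ∧ Tᶜ.Finite := by
  obtain ⟨⟨T, hT⟩, hlt⟩ := exists_lt_of_ciInf_lt h
  exact ⟨T, hT, lt_aleph0_iff_set_finite.mp hlt⟩

lemma aleph0_le_collapse (h : ∀ T, IsTransversal f T → Tᶜ.Infinite) : ℵ₀ ≤ collapse f :=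
  le_ciInf fun T => aleph0_le_mk_iff.mpr (h T.1 T.2).to_subtype

lemma finite_preimage_singleton_of_collapse_lt_aleph0 (h : collapse f < ℵ₀) (a : Ω) :
    (f ⁻¹' {a}).Finite := by
  obtain ⟨T, hT, hTc⟩ := exists_isTransversal_finite_compl h
  have hsub : f ⁻¹' {a} ⊆ Tᶜ ∪ (f ⁻¹' {a} ∩ T) := fun x hx => by
    by_cases hxT : x ∈ T
    · exact Or.inr ⟨hx, hxT⟩
    · exact Or.inl hxT
  refine (hTc.union (Subsingleton.finite ?_)).subset hsub
  rintro x ⟨hx, hxT⟩ y ⟨hy, hyT⟩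
  exact hT.1 hxT hyT (hx.trans hy.symm)

end Transversal

section Membership

variable {Ω : Type*} {f : Function.End Ω}

lemma mem_S12345_of_bijective (hf : Bijective f) : f ∈ S12345 := by
  have hc : collapse f = 0 := by
    refine le_antisymm ?_ zero_le
    simpa using collapse_le_mk_compl (f := f) ⟨hf.1.injOn, image_univ⟩
  have hd : defect f = 0 := by
    simp [defect, range_eq_univ.mpr hf.2]
  have hk : contract f = 0 := by
    have hempty : {a : Ω | (f ⁻¹' {a}).Infinite} = ∅ :=
      eq_empty_of_forall_notMem fun a ha => ha ((finite_singleton a).preimage hf.1.injOn)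
    simp [contract, hempty]
  simp [S12345, S1, S2, S3, S4, S5, hc, hd, hk, aleph0_pos]

lemma mem_S12345_of_aleph0_le (hd : ℵ₀ ≤ defect f) (hc : ℵ₀ ≤ collapse f)
    (hk : contract f < ℵ₀) : f ∈ S12345 :=
  ⟨⟨⟨⟨Or.inr (aleph0_pos.trans_le hd), Or.inl (aleph0_pos.trans_le hc)⟩, Or.inr hd⟩,
    Or.inl hc⟩, hk⟩

end Membership

section Defect

variable {Ω : Type*}

lemma defect_le_defect_comp (f g : Ω → Ω) : defect f ≤ defect (f ∘ g) :=
  mk_le_mk_of_subset (compl_subset_compl.mpr (range_comp_subset_range g f))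

lemma defect_add_defect_le_defect_comp {f : Ω → Ω} (hf : Injective f) (g : Ω → Ω) :
    defect f + defect g ≤ defect (f ∘ g) := by
  have hdisj : Disjoint (range f)ᶜ (f '' (range g)ᶜ) :=
    disjoint_compl_left_iff_subset.mpr (image_subset_range f _)
  have hsub : (range f)ᶜ ∪ f '' (range g)ᶜ ⊆ (range (f ∘ g))ᶜ := by
    rintro _ (hx | ⟨y, hy, rfl⟩) ⟨z, hz⟩
    · exact hx ⟨g z, hz⟩
    · exact hy ⟨z, hf hz⟩
  calc defect f + defect g = #((range f)ᶜ ∪ f '' (range g)ᶜ : Set Ω) := by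
        rw [mk_union_of_disjoint hdisj, mk_image_eq hf]; rfl
    _ ≤ defect (f ∘ g) := mk_le_mk_of_subset hsub

lemma exists_injective_mem_closure_natCast_le_defect {S : Set (Function.End Ω)}
    {u : Function.End Ω} (huS : u ∈ S) (hu : Injective u) (hdu : 0 < defect u) (n : ℕ) :
    ∃ h ∈ Subsemigroup.closure S, Injective h ∧ (n : Cardinal) ≤ defect h := by
  induction n with
  | zero => exact ⟨u, Subsemigroup.subset_closure huS, hu, by simp⟩
  | succ n ih =>
    obtain ⟨h, hS, hinj, hn⟩ := ih
    refine ⟨h * u, mul_mem hS (Subsemigroup.subset_closure huS), hinj.comp hu, ?_⟩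
    calc ((n + 1 : ℕ) : Cardinal) = n + 1 := by push_cast; rfl
      _ ≤ defect h + defect u := add_le_add hn (Cardinal.one_le_iff_pos.mpr hdu)
      _ ≤ defect (h ∘ u) := defect_add_defect_le_defect_comp hinj u

end Defect

lemma exists_bijective_mapsTo_of_finite_compl {Ω : Type*} [Infinite Ω] {A T : Set Ω}
    (hT : Tᶜ.Finite) (hle : #(Tᶜ : Set Ω) ≤ #(Aᶜ : Set Ω)) :
    ∃ σ : Ω → Ω, Bijective σ ∧ MapsTo σ A T := by
  obtain ⟨e⟩ := hle
  have hlt : #(Tᶜ : Set Ω) < #Ω :=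
    (lt_aleph0_iff_set_finite.mpr hT).trans_le (aleph0_le_mk Ω)
  obtain ⟨τ, hτ⟩ := extend_function_of_lt (e.trans (Embedding.subtype _)) hlt ⟨Equiv.refl Ω⟩
  refine ⟨τ.symm, τ.symm.bijective, fun a ha => by_contra fun hnot => ?_⟩
  have h := hτ ⟨τ.symm a, hnot⟩
  simp only [Equiv.apply_symm_apply, Embedding.trans_apply, Embedding.subtype_apply] at h
  exact (e ⟨τ.symm a, hnot⟩).2 (h ▸ ha)

lemma exists_injective_mem_closure_aleph0_le_defect {Ω : Type*} [Infinite Ω]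
    {S : Set (Function.End Ω)} {u v : Function.End Ω}
    (hS : ∀ σ : Function.End Ω, Bijective σ → σ ∈ S) (huS : u ∈ S) (hvS : v ∈ S)
    (hu : Injective u) (hdu : 0 < defect u) (hdv : ℵ₀ ≤ defect v) (hcv : collapse v < ℵ₀) :
    ∃ g ∈ Subsemigroup.closure S, Injective g ∧ ℵ₀ ≤ defect g := by
  obtain ⟨T, hT, hTc⟩ := exists_isTransversal_finite_compl hcv
  obtain ⟨n, hn⟩ := Cardinal.lt_aleph0.mp (lt_aleph0_iff_set_finite.mpr hTc)
  obtain ⟨h, hhS, hinj, hdh⟩ := exists_injective_mem_closure_natCast_le_defect huS hu hdu n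
  obtain ⟨σ, hσb, hσ⟩ : ∃ σ : Function.End Ω, Bijective σ ∧ MapsTo σ (range h) T :=
    exists_bijective_mapsTo_of_finite_compl hTc (hn ▸ hdh)
  have hσS : σ ∈ Subsemigroup.closure S := Subsemigroup.subset_closure (hS σ hσb)
  refine ⟨v * (σ * h), mul_mem (Subsemigroup.subset_closure hvS) (mul_mem hσS hhS), ?_,
    hdv.trans (defect_le_defect_comp v _)⟩
  have hmaps : ∀ x, σ (h x) ∈ T := fun x => hσ (mem_range_self x)
  exact fun x y hxy => hinj (hσb.1 (hT.1 (hmaps x) (hmaps y) hxy))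

section ExtendConst

variable {Ω : Type*} (g f : Ω → Ω) (a : Ω)

lemma aleph0_le_defect_extend_const (hf : ℵ₀ ≤ defect f) :
    ℵ₀ ≤ defect (extend g f fun _ => a) := by
  have hsub : (range f)ᶜ \ {a} ⊆ (range (extend g f fun _ => a))ᶜ := by
    rintro x ⟨hxf, hxa⟩ hx
    rcases range_extend_subset g f _ hx with hx | ⟨_, _, rfl⟩
    · exact hxf hx
    · exact hxa rfl
  have hinf : ((range f)ᶜ \ {a}).Infinite :=
    (infinite_coe_iff.mp (aleph0_le_mk_iff.mp hf)).sdiff (finite_singleton a)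
  exact (aleph0_le_mk_iff.mpr hinf.to_subtype).trans (mk_le_mk_of_subset hsub)

lemma aleph0_le_collapse_extend_const (hg : ℵ₀ ≤ defect g) :
    ℵ₀ ≤ collapse (extend g f fun _ => a) := by
  refine aleph0_le_collapse fun T hT => ?_
  have hconst : ∀ x ∈ (range g)ᶜ, extend g f (fun _ => a) x = a :=
    fun x hx => extend_apply' f _ x hx
  have hsub : (T ∩ (range g)ᶜ).Subsingleton := fun x hx y hy =>
    hT.1 hx.1 hy.1 ((hconst x hx.2).trans (hconst y hy.2).symm)
  have hinf : ((range g)ᶜ \ (T ∩ (range g)ᶜ)).Infinite :=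
    (infinite_coe_iff.mp (aleph0_le_mk_iff.mp hg)).sdiff hsub.finite
  exact hinf.mono fun x hx hxT => hx.2 ⟨hxT, hx.1⟩

lemma contract_extend_const_lt_aleph0 (hg : Injective g) (hf : ∀ b, (f ⁻¹' {b}).Finite) :
    contract (extend g f fun _ => a) < ℵ₀ := by
  have hsub : {b | ((extend g f fun _ => a) ⁻¹' {b}).Infinite} ⊆ {a} := by
    intro b hb
    by_contra hba
    refine hb (((hf b).image g).subset fun x hx => ?_)
    by_cases hxg : ∃ y, g y = x
    · obtain ⟨y, rfl⟩ := hxg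
      exact ⟨y, by simpa [hg.extend_apply] using hx, rfl⟩
    · exact absurd ((extend_apply' f _ x hxg).symm.trans hx).symm hba
  exact (mk_le_mk_of_subset hsub).trans_lt (by simp)

end ExtendConst

theorem stmt6_general (Ω : Type) [Infinite Ω] (u v f : Function.End Ω)
    (hu : Function.Injective u) (hdu : 0 < defect u)
    (hdv : ℵ₀ ≤ defect v) (hdf : ℵ₀ ≤ defect f)
    (hcv : collapse v < ℵ₀) (hcf : collapse f < ℵ₀) :
    f ∈ Subsemigroup.closure (S12345 ∪ {u, v}) := by
  obtain ⟨g, hgS, hg, hdg⟩ := exists_injective_mem_closure_aleph0_le_defect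
    (S := S12345 ∪ {u, v}) (fun σ hσ => Or.inl (mem_S12345_of_bijective hσ)) (by simp)
    (by simp) hu hdu hdv hcv
  set p : Function.End Ω := extend g f fun _ => Classical.arbitrary Ω
  have hp : p ∈ S12345 := mem_S12345_of_aleph0_le
    (aleph0_le_defect_extend_const g f _ hdf) (aleph0_le_collapse_extend_const g f _ hdg)
    (contract_extend_const_lt_aleph0 g f _ hg
      (finite_preimage_singleton_of_collapse_lt_aleph0 hcf))
  have hfac : f = p * g := (extend_comp hg f _).symm
  rw [hfac]
  exact mul_mem (Subsemigroup.subset_closure (Or.inl hp)) hgS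

theorem stmt6 (Ω : Type) [Countable Ω] [Infinite Ω] (u v f : Function.End Ω)
    (hu : Function.Injective u) (hdu : 0 < defect u)
    (hdv : ℵ₀ ≤ defect v) (hdf : ℵ₀ ≤ defect f)
    (hcv : collapse v < ℵ₀) (hcf : collapse f < ℵ₀) :
    f ∈ Subsemigroup.closure (S12345 ∪ {u, v}) :=
  stmt6_general Ω u v f hu hdu hdv hdf hcv hcf
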